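/- Let V_• be a quasi-bounded cochain complex of finite-dimensional vector spaces and φ_• a chain endomorphism with tr(φ_i) = 0 and tr(φ_i^H) = 0 for all i. Then the restriction of φ to the boundaries satisfies tr(φ_i^B) = 0 for all i, where φ_i^B is the induced endomorphism of B_i = im(d_{i-1}). -/

import Mathlib

/-!
Fix a complement `q` of an invariant subspace `p`: writing the identity as the sum of the two
projections gives `tr f = tr (f|p) + tr (f on M ⧸ p)`. Applied to `Z i = ker d_i ⊆ V i` and then to
`B i ⊆ Z i`, and using `V i ⧸ Z i ≅ B (i+1)` and `Z i ⧸ B i ≅ H i`, this gives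
`tr φ_i = tr φ_i^B + tr φ_i^H + tr φ_{i+1}^B`. Under the hypotheses consecutive boundary traces
therefore cancel, and since `B (N+1) = 0` they all vanish, by induction up and down from `N + 1`.
-/

open CategoryTheory

/-- The subspace of boundaries `B i = im (d_{i-1})` of a cochain complex. -/
noncomputable def bdry {k : Type*} [Field k] (V : CochainComplex (ModuleCat k) ℤ)
    (i : ℤ) : Submodule k (V.X i) :=
  LinearMap.range (V.d (i - 1) i).hom

namespace LinearMap

variable {k M N : Type*} [Field k] [AddCommGroup M] [Module k M] [AddCommGroup N] [Module k N]

theorem trace_eq_of_comp_eq (e : M ≃ₗ[k] N) {f : M →ₗ[k] M} {g : N →ₗ[k] N}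
    (h : e.toLinearMap ∘ₗ f = g ∘ₗ e.toLinearMap) : trace k M f = trace k N g := by
  rw [← trace_conj' f e]
  congr 1
  ext y
  simpa using congr($h (e.symm y))

theorem trace_eq_trace_restrict_add_trace_mapQ [FiniteDimensional k M] (f : M →ₗ[k] M)
    (p : Submodule k M) (hp : ∀ x ∈ p, f x ∈ p) :
    trace k M f = trace k p (f.restrict hp) + trace k (M ⧸ p) (p.mapQ p f hp) := by
  obtain ⟨q, hpq⟩ := p.exists_isCompl
  set πp := p.projectionOnto q hpq
  set πq := q.projectionOnto p hpq.symm
  have hid : p.subtype ∘ₗ πp + q.subtype ∘ₗ πq = LinearMap.id :=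
    Submodule.projection_add_projection_eq_id hpq
  have hrestrict : πp ∘ₗ f ∘ₗ p.subtype = f.restrict hp := by
    ext x
    simp [πp, Submodule.projectionOnto_apply_of_mem_left hpq (hp x x.2)]
  have hquot : (p.quotientEquivOfIsCompl q hpq).symm.toLinearMap ∘ₗ (πq ∘ₗ f ∘ₗ q.subtype) =
      p.mapQ p f hp ∘ₗ (p.quotientEquivOfIsCompl q hpq).symm.toLinearMap := by
    ext y
    exact Submodule.mk_quotientEquivOfIsCompl_apply hpq (Submodule.Quotient.mk (f y))
  calc trace k M f = trace k M (f ∘ₗ p.subtype ∘ₗ πp) + trace k M (f ∘ₗ q.subtype ∘ₗ πq) := by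
        rw [← map_add, ← comp_add, hid, comp_id]
    _ = trace k p (πp ∘ₗ f ∘ₗ p.subtype) + trace k q (πq ∘ₗ f ∘ₗ q.subtype) := by
        congr 1
        · exact trace_comp_comm' πp (f ∘ₗ p.subtype)
        · exact trace_comp_comm' πq (f ∘ₗ q.subtype)
    _ = _ := by rw [hrestrict, trace_eq_of_comp_eq _ hquot]

theorem trace_mapQ_ker_eq_trace_restrict_range (g : M →ₗ[k] N) {f : M →ₗ[k] M}
    {f' : N →ₗ[k] N} (h : g ∘ₗ f = f' ∘ₗ g) (hker : ∀ x ∈ ker g, f x ∈ ker g)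
    (hrange : ∀ y ∈ range g, f' y ∈ range g) :
    trace k (M ⧸ ker g) ((ker g).mapQ (ker g) f hker) = trace k (range g) (f'.restrict hrange) := by
  refine trace_eq_of_comp_eq g.quotKerEquivRange ?_
  ext x
  exact congr($h x)

theorem trace_restrict_restrict_eq_of_map_subtype_eq {f : M →ₗ[k] M} {q : Submodule k M}
    (hq : ∀ x ∈ q, f x ∈ q) {p' : Submodule k q} (hp' : ∀ x ∈ p', f.restrict hq x ∈ p')
    {p : Submodule k M} (hmap : p'.map q.subtype = p) (hp : ∀ x ∈ p, f x ∈ p) :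
    trace k p' ((f.restrict hq).restrict hp') = trace k p (f.restrict hp) := by
  subst hmap
  refine trace_eq_of_comp_eq (p'.equivMapOfInjective q.subtype q.injective_subtype) ?_
  ext x
  rfl

theorem trace_restrict_eq_zero_of_eq_bot {f : M →ₗ[k] M} {p : Submodule k M}
    (hp : ∀ x ∈ p, f x ∈ p) (hbot : p = ⊥) : trace k p (f.restrict hp) = 0 := by
  have : Subsingleton p := Submodule.subsingleton_iff_eq_bot.mpr hbot
  rw [Subsingleton.elim (f.restrict hp) 0, map_zero]

end LinearMap

theorem ModuleCat.trace_eq_of_iso {k : Type*} [Field k] {X Y : ModuleCat k} (e : X ≅ Y)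
    {f : X ⟶ X} {g : Y ⟶ Y} (h : f ≫ e.hom = e.hom ≫ g) :
    LinearMap.trace k X f.hom = LinearMap.trace k Y g.hom :=
  LinearMap.trace_eq_of_comp_eq e.toLinearEquiv congr(($h).hom)

theorem eq_zero_of_apply_sub_one_add_apply {G : Type*} [AddZeroClass G] {t : ℤ → G}
    (h : ∀ i, t (i - 1) + t i = 0) {N : ℤ} (hN : t N = 0) (i : ℤ) : t i = 0 := by
  induction i using Int.inductionOn' (b := N) with
  | zero => exact hN
  | succ j _ hj => simpa [hj] using h (j + 1)
  | pred j _ hj => simpa [hj] using h j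

namespace CategoryTheory.ShortComplex

open LinearMap

variable {k : Type*} [Field k] {S : ShortComplex (ModuleCat k)} (Φ : S ⟶ S)

theorem τ₂_mapsTo_range_f : ∀ x ∈ range S.f.hom, Φ.τ₂ x ∈ range S.f.hom := by
  rintro _ ⟨y, rfl⟩
  exact ⟨Φ.τ₁ y, congr(($Φ.comm₁₂).hom y)⟩

theorem τ₂_mapsTo_ker_g : ∀ x ∈ ker S.g.hom, Φ.τ₂ x ∈ ker S.g.hom := by
  intro x hx
  rw [mem_ker] at hx ⊢
  rw [← ModuleCat.comp_apply, Φ.comm₂₃, ModuleCat.comp_apply, hx, map_zero]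

theorem τ₃_mapsTo_range_g : ∀ x ∈ range S.g.hom, Φ.τ₃ x ∈ range S.g.hom := by
  rintro _ ⟨y, rfl⟩
  exact ⟨Φ.τ₂ y, congr(($Φ.comm₂₃).hom y)⟩

theorem restrict_τ₂_mapsTo_range_moduleCatToCycles :
    ∀ x ∈ range S.moduleCatToCycles,
      Φ.τ₂.hom.restrict (τ₂_mapsTo_ker_g Φ) x ∈ range S.moduleCatToCycles := by
  rintro _ ⟨y, rfl⟩
  exact ⟨Φ.τ₁ y, Subtype.ext congr(($Φ.comm₁₂).hom y)⟩

theorem map_subtype_range_moduleCatToCycles :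
    (range S.moduleCatToCycles).map (ker S.g.hom).subtype = range S.f.hom :=
  (range_comp S.moduleCatToCycles (ker S.g.hom).subtype).symm

theorem trace_homologyMap :
    trace k S.homology (homologyMap Φ).hom =
      trace k (ker S.g.hom ⧸ range S.moduleCatToCycles)
        ((range S.moduleCatToCycles).mapQ _ (Φ.τ₂.hom.restrict (τ₂_mapsTo_ker_g Φ))
          (restrict_τ₂_mapsTo_range_moduleCatToCycles Φ)) := by
  let ψ : LeftHomologyMapData Φ S.moduleCatLeftHomologyData S.moduleCatLeftHomologyData :=
    { φK := ModuleCat.ofHom (Φ.τ₂.hom.restrict (τ₂_mapsTo_ker_g Φ))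
      φH := ModuleCat.ofHom ((range S.moduleCatToCycles).mapQ _
        (Φ.τ₂.hom.restrict (τ₂_mapsTo_ker_g Φ)) (restrict_τ₂_mapsTo_range_moduleCatToCycles Φ))
      commf' := by
        ext y
        exact Subtype.ext congr(($Φ.comm₁₂).hom y).symm }
  exact ModuleCat.trace_eq_of_iso _ ψ.homologyMap_comm

theorem trace_τ₂_eq [FiniteDimensional k S.X₂] :
    trace k S.X₂ Φ.τ₂.hom =
      trace k (range S.f.hom) (Φ.τ₂.hom.restrict (τ₂_mapsTo_range_f Φ)) +
        trace k S.homology (homologyMap Φ).hom +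
          trace k (range S.g.hom) (Φ.τ₃.hom.restrict (τ₃_mapsTo_range_g Φ)) := by
  rw [trace_eq_trace_restrict_add_trace_mapQ Φ.τ₂.hom _ (τ₂_mapsTo_ker_g Φ),
    trace_mapQ_ker_eq_trace_restrict_range S.g.hom (f := Φ.τ₂.hom) (f' := Φ.τ₃.hom)
      congr(($Φ.comm₂₃).hom) _ (τ₃_mapsTo_range_g Φ),
    trace_eq_trace_restrict_add_trace_mapQ (Φ.τ₂.hom.restrict (τ₂_mapsTo_ker_g Φ)) _
      (restrict_τ₂_mapsTo_range_moduleCatToCycles Φ),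
    trace_restrict_restrict_eq_of_map_subtype_eq _ _ map_subtype_range_moduleCatToCycles
      (τ₂_mapsTo_range_f Φ), trace_homologyMap]

end CategoryTheory.ShortComplex

section CochainComplex

open LinearMap

variable {k : Type*} [Field k] {V : CochainComplex (ModuleCat k) ℤ}

theorem mapsTo_bdry (φ : V ⟶ V) (i : ℤ) : ∀ x ∈ bdry V i, φ.f i x ∈ bdry V i := by
  rintro _ ⟨y, rfl⟩
  exact ⟨φ.f (i - 1) y, congr(($(φ.comm (i - 1) i)).hom y)⟩

theorem bdry_add_one_eq_bot {N : ℤ} (h : V.d N (N + 1) = 0) : bdry V (N + 1) = ⊥ := by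
  rw [bdry, add_sub_cancel_right, h, ModuleCat.hom_zero, range_zero]

/-- Stated at `i - 1` so that `bdry V (i - 1)` and `bdry V i` are literally the ranges of the two
differentials of `V.sc' (i - 1 - 1) (i - 1) i`; at `i` one would meet `V.d (i + 1 - 1) (i + 1)`. -/
theorem trace_f_sub_one_eq [∀ i : ℤ, FiniteDimensional k (V.X i)] (φ : V ⟶ V) (i : ℤ) :
    trace k (V.X (i - 1)) (φ.f (i - 1)).hom =
      trace k (bdry V (i - 1)) ((φ.f (i - 1)).hom.restrict (mapsTo_bdry φ (i - 1))) +
        trace k (V.homology (i - 1)) (HomologicalComplex.homologyMap φ (i - 1)).hom +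
          trace k (bdry V i) ((φ.f i).hom.restrict (mapsTo_bdry φ i)) := by
  let Φ := (HomologicalComplex.shortComplexFunctor' _ _ (i - 1 - 1) (i - 1) i).map φ
  let e := HomologicalComplex.homologyFunctorIso' (ModuleCat k) (ComplexShape.up ℤ)
    (i - 1 - 1) (i - 1) i (by simp) (by simp)
  have hH : trace k (V.homology (i - 1)) (HomologicalComplex.homologyMap φ (i - 1)).hom =
      trace k (V.sc' (i - 1 - 1) (i - 1) i).homology (ShortComplex.homologyMap Φ).hom :=
    ModuleCat.trace_eq_of_iso (e.app V) (e.hom.naturality φ)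
  have : FiniteDimensional k (V.sc' (i - 1 - 1) (i - 1) i).X₂ :=
    inferInstanceAs (FiniteDimensional k (V.X (i - 1)))
  rw [hH]
  exact ShortComplex.trace_τ₂_eq Φ

end CochainComplex

/-- For a quasi-bounded complex, if all componentwise traces and all traces on cohomology
of a chain endomorphism `φ` vanish, then the traces of the restrictions of `φ` to the
boundary subspaces also vanish. -/
theorem stmt_15 {k : Type*} [Field k] (V : CochainComplex (ModuleCat k) ℤ)
    [∀ i : ℤ, FiniteDimensional k (V.X i)]
    (hqb : ∃ N : ℤ, V.d N (N + 1) = 0) (φ : V ⟶ V)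
    (htr : ∀ i : ℤ, LinearMap.trace k (V.X i) (φ.f i).hom = 0)
    (htrH : ∀ i : ℤ, LinearMap.trace k (V.homology i)
      (HomologicalComplex.homologyMap φ i).hom = 0)
    (hφB : ∀ i : ℤ, ∀ x ∈ bdry V i, φ.f i x ∈ bdry V i) :
    ∀ i : ℤ, LinearMap.trace k (bdry V i) ((φ.f i).hom.restrict (hφB i)) = 0 := by
  obtain ⟨N, hN⟩ := hqb
  refine eq_zero_of_apply_sub_one_add_apply (fun i => ?_) (N := N + 1)
    (LinearMap.trace_restrict_eq_zero_of_eq_bot _ (bdry_add_one_eq_bot hN))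
  have h := trace_f_sub_one_eq φ i
  rw [htr, htrH, add_zero] at h
  exact h.symm
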